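/- arXiv:1712.01940 — 2 statements merged into one kernel-verified Lean document; each statement's English description precedes it below -/
import Mathlib

section
/- Let r : D⊗D → D⊗D be a non-degenerate coalgebra automorphism that induces a non-degenerate set-theoretic solution r₀ of the braid equation on X×X. Then for all (a,b),(c,d),(e,f) ∈ Y, with T := [a,b]×[c,d]×[e,f], one has Σ LBE(S,T) = δ_{a,b}·δ_{c,d}·δ_{e,f} and Σ RBE(S,T) = δ_{a,b}·δ_{c,d}·δ_{e,f}, where both sums run over all singleton subintervals S = [(g,i,k),(g,i,k)] ⊆ T (i.e. over all S ⊆ T with h(S) = 0). -/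
open Finsupp

namespace BraidPaper

/-- The set of ordered pairs `Y = {(a,b) : a ≤ b}` indexing the basis of the
incidence coalgebra of `X`. -/
abbrev Y (X : Type) [PartialOrder X] : Type := {p : X × X // p.1 ≤ p.2}

/-- The incidence coalgebra `D` of `X`, modelled as the free `K`-module on `Y`. -/
abbrev Inc (K X : Type) [Field K] [PartialOrder X] : Type := Y X →₀ K

/-- `D ⊗ D`, modelled as the free `K`-module on `Y × Y`. -/
abbrev Inc2 (K X : Type) [Field K] [PartialOrder X] : Type := (Y X × Y X) →₀ K

/-- `D ⊗ D ⊗ D`, modelled as the free `K`-module on `Y × Y × Y`. -/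
abbrev Inc3 (K X : Type) [Field K] [PartialOrder X] : Type := (Y X × Y X × Y X) →₀ K

/-- `(D ⊗ D) ⊗ (D ⊗ D)`, modelled as the free `K`-module on `(Y × Y) × (Y × Y)`. -/
abbrev Inc4 (K X : Type) [Field K] [PartialOrder X] : Type :=
  ((Y X × Y X) × (Y X × Y X)) →₀ K

variable {K X : Type} [Field K] [PartialOrder X] [DecidableEq X]
  [@DecidableRel X X (· ≤ ·)] [LocallyFiniteOrder X]

/-- The coefficients `λ_{a|b|c|d}^{e|f|g|h}` of a linear endomorphism of `D ⊗ D`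
(defined to be `0` unless `a ≤ b`, `c ≤ d`, `e ≤ f` and `g ≤ h`). -/
noncomputable def lam (r : Inc2 K X →ₗ[K] Inc2 K X) (a b c d e f g h : X) : K :=
  if h1 : a ≤ b then if h2 : c ≤ d then if h3 : e ≤ f then if h4 : g ≤ h then
    (r (single (⟨(a, b), h1⟩, ⟨(c, d), h2⟩) 1)) (⟨(e, f), h3⟩, ⟨(g, h), h4⟩)
  else 0 else 0 else 0 else 0

/-- The counit of `D ⊗ D`. -/
noncomputable def eps2 : Inc2 K X →ₗ[K] K :=
  Finsupp.lsum K fun pq =>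
    if pq.1.1.1 = pq.1.1.2 ∧ pq.2.1.1 = pq.2.1.2 then LinearMap.id else 0

/-- The comultiplication of `D ⊗ D`. -/
noncomputable def comul2 : Inc2 K X →ₗ[K] Inc4 K X :=
  Finsupp.lsum K fun pq => LinearMap.toSpanSingleton K _ <|
    ∑ x ∈ (Finset.Icc pq.1.1.1 pq.1.1.2).attach,
      ∑ y ∈ (Finset.Icc pq.2.1.1 pq.2.1.2).attach,
        single ((⟨(pq.1.1.1, x.1), (Finset.mem_Icc.mp x.2).1⟩,
                 ⟨(pq.2.1.1, y.1), (Finset.mem_Icc.mp y.2).1⟩),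
                (⟨(x.1, pq.1.1.2), (Finset.mem_Icc.mp x.2).2⟩,
                 ⟨(y.1, pq.2.1.2), (Finset.mem_Icc.mp y.2).2⟩)) (1 : K)

/-- The tensor product `r ⊗ s` of two linear endomorphisms of `D ⊗ D`, in the
free-module model. -/
noncomputable def tmap (r s : Inc2 K X →ₗ[K] Inc2 K X) : Inc4 K X →ₗ[K] Inc4 K X :=
  Finsupp.lsum K fun pq => LinearMap.toSpanSingleton K _ <|
    (r (single pq.1 1)).sum fun p a => (s (single pq.2 1)).sum fun q b =>
      single (p, q) (a * b)

/-- `r` is a coalgebra automorphism of `D ⊗ D`. -/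
def IsCoalgAuto (r : Inc2 K X →ₗ[K] Inc2 K X) : Prop :=
  Function.Bijective ⇑r ∧ comul2 ∘ₗ r = tmap r r ∘ₗ comul2 ∧ eps2 ∘ₗ r = eps2

/-- `D ⊗ ε : D ⊗ D → D`. -/
noncomputable def rcu : Inc2 K X →ₗ[K] Inc K X :=
  Finsupp.lsum K fun pq => LinearMap.toSpanSingleton K _ <|
    if pq.2.1.1 = pq.2.1.2 then single pq.1 (1 : K) else 0

/-- `ε ⊗ D : D ⊗ D → D`. -/
noncomputable def lcu : Inc2 K X →ₗ[K] Inc K X :=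
  Finsupp.lsum K fun pq => LinearMap.toSpanSingleton K _ <|
    if pq.1.1.1 = pq.1.1.2 then single pq.2 (1 : K) else 0

/-- `(D ⊗ σ) ∘ (Δ ⊗ D)` where `σ := (D ⊗ ε) ∘ r`. -/
noncomputable def ndeg1 (r : Inc2 K X →ₗ[K] Inc2 K X) : Inc2 K X →ₗ[K] Inc2 K X :=
  Finsupp.lsum K fun pq => LinearMap.toSpanSingleton K _ <|
    ∑ x ∈ (Finset.Icc pq.1.1.1 pq.1.1.2).attach,
      ((rcu ∘ₗ r) (single ((⟨(x.1, pq.1.1.2), (Finset.mem_Icc.mp x.2).2⟩ : Y X), pq.2) 1)).sum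
        fun s a => single ((⟨(pq.1.1.1, x.1), (Finset.mem_Icc.mp x.2).1⟩ : Y X), s) a

/-- `(τ ⊗ D) ∘ (D ⊗ Δ)` where `τ := (ε ⊗ D) ∘ r`. -/
noncomputable def ndeg2 (r : Inc2 K X →ₗ[K] Inc2 K X) : Inc2 K X →ₗ[K] Inc2 K X :=
  Finsupp.lsum K fun pq => LinearMap.toSpanSingleton K _ <|
    ∑ y ∈ (Finset.Icc pq.2.1.1 pq.2.1.2).attach,
      ((lcu ∘ₗ r) (single (pq.1, (⟨(pq.2.1.1, y.1), (Finset.mem_Icc.mp y.2).1⟩ : Y X)) 1)).sum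
        fun s a => single (s, (⟨(y.1, pq.2.1.2), (Finset.mem_Icc.mp y.2).2⟩ : Y X)) a

/-- `r` is non-degenerate. -/
def NonDeg (r : Inc2 K X →ₗ[K] Inc2 K X) : Prop :=
  Function.Bijective ⇑(ndeg1 r) ∧ Function.Bijective ⇑(ndeg2 r)

/-- The set-map `r₀(a,c) = (ᵃc, aᶜ)` built from left translations `lt` (so
`ᵃc = lt a c`) and right translations `rt` (so `aᶜ = rt a c`). -/
def r0map (lt rt : X → X → X) : X × X → X × X := fun p => (lt p.1 p.2, rt p.1 p.2)

/-- The set-map `r₀` is non-degenerate. -/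
def NonDeg0 (lt rt : X → X → X) : Prop :=
  (∀ a : X, Function.Bijective (lt a)) ∧ (∀ c : X, Function.Bijective (fun a => rt a c))

def m12 (f : X × X → X × X) : X × X × X → X × X × X :=
  fun t => ((f (t.1, t.2.1)).1, (f (t.1, t.2.1)).2, t.2.2)

def m23 (f : X × X → X × X) : X × X × X → X × X × X := fun t => (t.1, f t.2)

/-- `f : X × X → X × X` is a set-theoretic solution of the braid equation. -/
def Braid0 (f : X × X → X × X) : Prop :=
  m12 f ∘ m23 f ∘ m12 f = m23 f ∘ m12 f ∘ m23 f

/-- `r` induces `r₀` on `X × X`. -/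
def Induces (r : Inc2 K X →ₗ[K] Inc2 K X) (lt rt : X → X → X) : Prop :=
  ∀ a c : X,
    r (single (⟨(a, a), le_refl a⟩, ⟨(c, c), le_refl c⟩) 1)
      = single (⟨(lt a c, lt a c), le_refl _⟩, ⟨(rt a c, rt a c), le_refl _⟩) 1

/-- `r ⊗ id` acting on `D ⊗ D ⊗ D`. -/
noncomputable def r12 (r : Inc2 K X →ₗ[K] Inc2 K X) : Inc3 K X →ₗ[K] Inc3 K X :=
  Finsupp.lsum K fun t => LinearMap.toSpanSingleton K _ <|
    (r (single (t.1, t.2.1) 1)).sum fun p a => single (p.1, p.2, t.2.2) a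

/-- `id ⊗ r` acting on `D ⊗ D ⊗ D`. -/
noncomputable def r23 (r : Inc2 K X →ₗ[K] Inc2 K X) : Inc3 K X →ₗ[K] Inc3 K X :=
  Finsupp.lsum K fun t => LinearMap.toSpanSingleton K _ <|
    (r (single t.2 1)).sum fun p a => single (t.1, p) a

/-- The braid equation `r₁₂ ∘ r₂₃ ∘ r₁₂ = r₂₃ ∘ r₁₂ ∘ r₂₃` on `D ⊗ D ⊗ D`. -/
def BraidEqR (r : Inc2 K X →ₗ[K] Inc2 K X) : Prop :=
  r12 r ∘ₗ r23 r ∘ₗ r12 r = r23 r ∘ₗ r12 r ∘ₗ r23 r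

/-- The height of the interval `[a,b]`: the length of its longest chain. -/
noncomputable def hgt (a b : X) : ℕ∞ := Set.chainHeight (Set.Icc a b) (· < ·) - 1

/-- `LBE(S,T)` for `T = [a,b]×[c,d]×[e,f] ⊇ S = [g,h]×[i,j]×[k,l]`. -/
noncomputable def LBE (r : Inc2 K X →ₗ[K] Inc2 K X) (lt rt : X → X → X)
    (a b c d e f g h i j k l : X) : K :=
  ∑ x ∈ Finset.Icc a g, ∑ y ∈ Finset.Icc h b, ∑ w ∈ Finset.Icc c i,
  ∑ z ∈ Finset.Icc j d, ∑ u ∈ Finset.Icc e k, ∑ v ∈ Finset.Icc l f,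
    lam r a b c d (lt a w) (lt a z) (rt x c) (rt y c) *
    lam r (rt x c) (rt y c) e f (lt (rt x c) u) (lt (rt x c) v)
      (rt (rt g c) e) (rt (rt h c) e) *
    lam r (lt a w) (lt a z) (lt (rt x c) u) (lt (rt x c) v)
      (lt a (lt c k)) (lt a (lt c l))
      (rt (lt a i) (lt (rt a i) e)) (rt (lt a j) (lt (rt a j) e))

/-- `RBE(S,T)` for `T = [a,b]×[c,d]×[e,f] ⊇ S = [g,h]×[i,j]×[k,l]`. -/
noncomputable def RBE (r : Inc2 K X →ₗ[K] Inc2 K X) (lt rt : X → X → X)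
    (a b c d e f g h i j k l : X) : K :=
  ∑ x ∈ Finset.Icc a g, ∑ y ∈ Finset.Icc h b, ∑ w ∈ Finset.Icc c i,
  ∑ z ∈ Finset.Icc j d, ∑ u ∈ Finset.Icc e k, ∑ v ∈ Finset.Icc l f,
    lam r c d e f (lt c u) (lt c v) (rt w e) (rt z e) *
    lam r a b (lt c u) (lt c v) (lt a (lt c k)) (lt a (lt c l))
      (rt x (lt c u)) (rt y (lt c u)) *
    lam r (rt x (lt c u)) (rt y (lt c u)) (rt w e) (rt z e)
      (lt (rt a (lt i e)) (rt i e)) (lt (rt a (lt j e)) (rt j e))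
      (rt (rt g c) e) (rt (rt h c) e)

/-- the height of `T = [a,b]×[c,d]×[e,f]`. -/
noncomputable def hgt3 (a b c d e f : X) : ℕ∞ := hgt a b + hgt c d + hgt e f

/-- `LSQ(S,T)` for `T = [a,b]×[c,d] ⊇ S = [e,f]×[g,h]`. -/
noncomputable def LSQ (r : Inc2 K X →ₗ[K] Inc2 K X) (lt rt : X → X → X)
    (a b c d e f g h : X) : K :=
  ∑ x ∈ Finset.Icc a e, ∑ y ∈ Finset.Icc f b, ∑ w ∈ Finset.Icc c g, ∑ z ∈ Finset.Icc h d,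
    lam r a b c d (lt a w) (lt a z) (rt x c) (rt y c) *
    lam r (lt a w) (lt a z) (rt x c) (rt y c)
      (lt (lt a w) (rt e c)) (lt (lt a w) (rt f c))
      (rt (lt a g) (rt x c)) (rt (lt a h) (rt x c))

/-- `RSQ(S,T)` for `T = [a,b]×[c,d] ⊇ S = [e,f]×[g,h]`. -/
def RSQ (K : Type) [Field K] (a b c d e f g h : X) : K :=
  (if a = e then (1 : K) else 0) * (if b = f then 1 else 0) *
  (if c = g then 1 else 0) * (if d = h then 1 else 0)

/-- the height of `T = [a,b]×[c,d]`. -/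
noncomputable def hgt2 (a b c d : X) : ℕ∞ := hgt a b + hgt c d

/-- `r` has set-type square. -/
def SetSq (r : Inc2 K X →ₗ[K] Inc2 K X) (lt rt : X → X → X) : Prop :=
  ∀ (a b c d : X) (hab : a ≤ b) (hcd : c ≤ d)
    (h1 : lt (lt a c) (rt a c) ≤ lt (lt a c) (rt b c))
    (h2 : rt (lt a c) (rt a c) ≤ rt (lt a d) (rt a c)),
    r (r (single (⟨(a, b), hab⟩, ⟨(c, d), hcd⟩) 1))
      = single (⟨(lt (lt a c) (rt a c), lt (lt a c) (rt b c)), h1⟩,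
                ⟨(rt (lt a c) (rt a c), rt (lt a d) (rt a c)), h2⟩) 1

/-- `r` has set-type square up to height 1. -/
def SetSq1 (r : Inc2 K X →ₗ[K] Inc2 K X) (lt rt : X → X → X) : Prop :=
  ∀ (a b c d : X) (hab : a ≤ b) (hcd : c ≤ d), hgt a b + hgt c d = 1 →
    ∀ (h1 : lt (lt a c) (rt a c) ≤ lt (lt a c) (rt b c))
      (h2 : rt (lt a c) (rt a c) ≤ rt (lt a d) (rt a c)),
    r (r (single (⟨(a, b), hab⟩, ⟨(c, d), hcd⟩) 1))
      = single (⟨(lt (lt a c) (rt a c), lt (lt a c) (rt b c)), h1⟩,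
                ⟨(rt (lt a c) (rt a c), rt (lt a d) (rt a c)), h2⟩) 1

/-- `α_r(c)(a,b)` (for translations given by poset automorphisms `φl`, `φr`). -/
noncomputable def alphaR (r : Inc2 K X →ₗ[K] Inc2 K X) (φl φr : X → X) (c a b : X) : K :=
  lam r a b c c (φl c) (φl c) (φr a) (φr b)

/-- `β_r(c)(a,b)`. -/
noncomputable def betaR (r : Inc2 K X →ₗ[K] Inc2 K X) (φl φr : X → X) (c a b : X) : K :=
  lam r a b c c (φl c) (φl c) (φr a) (φr a)

/-- `α_l(c)(a,b)`. -/
noncomputable def alphaL (r : Inc2 K X →ₗ[K] Inc2 K X) (φl φr : X → X) (c a b : X) : K :=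
  lam r c c a b (φl a) (φl b) (φr c) (φr c)

/-- `β_l(c)(a,b)`. -/
noncomputable def betaL (r : Inc2 K X →ₗ[K] Inc2 K X) (φl φr : X → X) (c a b : X) : K :=
  lam r c c a b (φl a) (φl a) (φr c) (φr c)

/-- `Γ_{a|b|c|d}`. -/
noncomputable def Gam (r : Inc2 K X →ₗ[K] Inc2 K X) (φl φr : X → X) (a b c d : X) : K :=
  lam r a b c d (φl c) (φl c) (φr a) (φr a)

/-- `X` is connected. -/
def Connected (X : Type) [PartialOrder X] : Prop :=
  ∀ x y : X, Relation.ReflTransGen (fun a b : X => a ≤ b ∨ b ≤ a) x y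



/-!
Both coalgebra identities of `r` become identities between the coefficients `λ`. The counit
gives `∑_{E,G} λ_{A|B|C|D}^{E|E|G|G} = δ_{A,B} δ_{C,D}`; the comultiplication splits any
coefficient through an intermediate pair `(M,N)` as a sum over `[A,B] × [C,D]`. Splitting down to
the basis elements `(x,x) ⊗ (w,w)`, on which `r` acts through `r₀`, shows that a nonzero
`λ_{A|B|C|D}^{E|F|G|H}` has `(E,G) = r₀(x,w)` and `(F,H) = r₀(x',w')` with `x ≤ x'` in `[A,B]`
and `w ≤ w'` in `[C,D]`. As `r` is injective, an off-diagonal basis element cannot be sent into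
the span of the diagonal ones; on covers this forces `ᵃ(-) = ˣ(-)` and `(-)ᶜ = (-)ʷ` whenever
`a ≤ x` and `c ≤ w`, and makes every translation monotone, while surjectivity of `r` makes them
order embeddings. The counit identity then reads
`∑_{x ∈ [A,B], w ∈ [C,D]} λ_{A|B|C|D}^{ᴬw|ᴬw|x^C|x^C} = δ_{A,B} δ_{C,D}`. After exchanging the
sum over `S` with the sums over the intermediate points, the braid relation `ᵃ(ᶜk) = ⁽ᵃᶜ⁾(⁽ᵃ^ᶜ⁾k)`
and the constancy of translations bring the inner sums of `LBE` into this form, and the total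
collapses in three steps. `RBE` is `LBE` for `τ ∘ r ∘ τ` and the flipped solution.
-/

-- Reopening the namespace discards the blanket instance `variable`s of the definitions, so
-- that each lemma below takes only the instances it uses.
end BraidPaper

namespace BraidPaper

section Sums

variable {α M : Type} [PartialOrder α] [LocallyFiniteOrder α] [AddCommMonoid M]

theorem sum_Icc_comp {φ : α → α} (hφ : Function.Bijective φ) (hle : ∀ {u v}, φ u ≤ φ v ↔ u ≤ v)
    (f : α → M) (u v : α) : ∑ m ∈ Finset.Icc (φ u) (φ v), f m = ∑ k ∈ Finset.Icc u v, f (φ k) :=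
  (Finset.sum_equiv (Equiv.ofBijective φ hφ) (fun k => by simp [hle]) (fun _ _ => rfl)).symm

theorem sum_Icc_mul_ite [DecidableEq α] {R : Type} [NonAssocSemiring R] {a b : α} (hab : a ≤ b) (F : α → R) :
    ∑ z ∈ Finset.Icc a b, F z * (if a = z then 1 else 0) = F a := by
  simp [hab]

theorem sum_Icc_nested3 (a b c d e f : α) (T : α → α → α → α → α → α → α → α → α → M) :
    ∑ g ∈ Finset.Icc a b, ∑ i ∈ Finset.Icc c d, ∑ k ∈ Finset.Icc e f,
      ∑ x ∈ Finset.Icc a g, ∑ y ∈ Finset.Icc g b, ∑ w ∈ Finset.Icc c i, ∑ z ∈ Finset.Icc i d,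
        ∑ u ∈ Finset.Icc e k, ∑ v ∈ Finset.Icc k f, T g i k x y w z u v
    = ∑ x ∈ Finset.Icc a b, ∑ y ∈ Finset.Icc x b, ∑ w ∈ Finset.Icc c d, ∑ z ∈ Finset.Icc w d,
      ∑ u ∈ Finset.Icc e f, ∑ v ∈ Finset.Icc u f,
        ∑ g ∈ Finset.Icc x y, ∑ i ∈ Finset.Icc w z, ∑ k ∈ Finset.Icc u v,
          T g i k x y w z u v := by
  rw [Finset.sum_sigma', Finset.sum_sigma', Finset.sum_sigma', Finset.sum_sigma',
    Finset.sum_sigma', Finset.sum_sigma', Finset.sum_sigma', Finset.sum_sigma']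
  conv_rhs => rw [Finset.sum_sigma', Finset.sum_sigma', Finset.sum_sigma', Finset.sum_sigma',
    Finset.sum_sigma', Finset.sum_sigma', Finset.sum_sigma', Finset.sum_sigma']
  refine Finset.sum_nbij'
    (fun p => ⟨⟨⟨⟨⟨⟨⟨⟨p.1.1.1.1.1.2, p.1.1.1.1.2⟩, p.1.1.1.2⟩, p.1.1.2⟩, p.1.2⟩, p.2⟩,
        p.1.1.1.1.1.1.1.1⟩, p.1.1.1.1.1.1.1.2⟩, p.1.1.1.1.1.1.2⟩)
    (fun q => ⟨⟨⟨⟨⟨⟨⟨⟨q.1.1.2, q.1.2⟩, q.2⟩, q.1.1.1.1.1.1.1.1⟩, q.1.1.1.1.1.1.1.2⟩,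
        q.1.1.1.1.1.1.2⟩, q.1.1.1.1.1.2⟩, q.1.1.1.1.2⟩, q.1.1.1.2⟩)
    ?_ ?_ (fun _ _ => rfl) (fun _ _ => rfl) (fun _ _ => rfl)
  all_goals
    rintro ⟨⟨⟨⟨⟨⟨⟨⟨p1, p2⟩, p3⟩, p4⟩, p5⟩, p6⟩, p7⟩, p8⟩, p9⟩
    simp only [Finset.mem_sigma, Finset.mem_Icc]
    intro h
    and_intros <;> order

end Sums

theorem apply_eq_sum_mul_apply_single {K α β : Type} [Field K] (f : (α →₀ K) →ₗ[K] (β →₀ K))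
    (v : α →₀ K) (t : β) : f v t = ∑ P ∈ v.support, v P * f (single P 1) t := by
  conv_lhs => rw [← Finsupp.sum_single v]
  rw [map_finsuppSum, Finsupp.sum_apply, Finsupp.sum]
  refine Finset.sum_congr rfl fun P _ => ?_
  rw [← smul_eq_mul, ← Finsupp.smul_apply, ← map_smul, Finsupp.smul_single_one]

section SetSolution

variable {X : Type} {lt rt : X → X → X}

theorem lt_lt_rt_eq (hbr0 : Braid0 (r0map lt rt)) (a c k : X) :
    lt (lt a c) (lt (rt a c) k) = lt a (lt c k) :=
  congrArg Prod.fst (congrFun hbr0 (a, c, k))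

theorem NonDeg0.swap (hnd0 : NonDeg0 lt rt) : NonDeg0 (fun a c => rt c a) (fun a c => lt c a) :=
  ⟨hnd0.2, hnd0.1⟩

theorem Braid0.swap (hbr0 : Braid0 (r0map lt rt)) :
    Braid0 (r0map (fun a c => rt c a) (fun a c => lt c a)) := by
  funext ⟨x, y, z⟩
  have h := congrFun hbr0 (z, y, x)
  simp only [m12, m23, r0map, Function.comp_apply, Prod.mk.injEq] at h ⊢
  exact ⟨h.2.2.symm, h.2.1.symm, h.1.symm⟩

end SetSolution

section Coefficients

variable {K X : Type} [Field K] [PartialOrder X] [@DecidableRel X X (· ≤ ·)]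
  {r : Inc2 K X →ₗ[K] Inc2 K X} {lt rt : X → X → X}

theorem lam_of_le (r : Inc2 K X →ₗ[K] Inc2 K X) {a b c d e f g h : X}
    (hab : a ≤ b) (hcd : c ≤ d) (hef : e ≤ f) (hgh : g ≤ h) :
    lam r a b c d e f g h
      = r (single (⟨(a, b), hab⟩, ⟨(c, d), hcd⟩) 1) (⟨(e, f), hef⟩, ⟨(g, h), hgh⟩) := by
  simp [lam, hab, hcd, hef, hgh]

theorem le_of_lam_ne_zero {a b c d e f g h : X} (hne : lam r a b c d e f g h ≠ 0) :
    a ≤ b ∧ c ≤ d ∧ e ≤ f ∧ g ≤ h := by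
  unfold lam at hne
  split_ifs at hne <;> simp_all

theorem Induces.lam_eq [DecidableEq X] (hind : Induces r lt rt) (a c e f g h : X) :
    lam r a a c c e f g h
      = if e = lt a c ∧ f = lt a c ∧ g = rt a c ∧ h = rt a c then 1 else 0 := by
  unfold lam
  split_ifs with h3 h4 hc hc <;> try rfl
  all_goals first
    | (rw [hind, Finsupp.single_apply]; simp only [Prod.ext_iff, Subtype.ext_iff]
       split_ifs <;> grind)
    | grind

end Coefficients

section TensorMaps

variable {K X : Type} [Field K] [PartialOrder X] [DecidableEq X]

theorem tmap_single_apply (r s : Inc2 K X →ₗ[K] Inc2 K X) (P : (Y X × Y X) × (Y X × Y X))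
    (k : K) (Q₁ Q₂ : Y X × Y X) :
    tmap r s (single P k) (Q₁, Q₂) = k * (r (single P.1 1) Q₁ * s (single P.2 1) Q₂) := by
  simp only [tmap, Finsupp.lsum_single, LinearMap.toSpanSingleton_apply, Finsupp.smul_apply,
    smul_eq_mul, Finsupp.sum_apply, Finsupp.single_apply, Prod.mk.injEq, ite_and]
  simp only [Finsupp.sum, Finset.sum_ite_irrel, Finset.sum_const_zero, Finset.sum_ite_eq',
    Finsupp.mem_support_iff]
  split_ifs <;> simp_all

theorem eps2_apply (v : Inc2 K X) :
    eps2 v = ∑ Q ∈ v.support, if Q.1.1.1 = Q.1.1.2 ∧ Q.2.1.1 = Q.2.1.2 then v Q else 0 := by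
  simp only [eps2, Finsupp.lsum_apply, Finsupp.sum]
  exact Finset.sum_congr rfl fun Q _ => by split_ifs <;> rfl

variable [LocallyFiniteOrder X]

theorem comul2_single_apply (P : Y X × Y X) {E M F G N H : X} (hEM : E ≤ M) (hMF : M ≤ F)
    (hGN : G ≤ N) (hNH : N ≤ H) :
    comul2 (single P (1 : K)) ((⟨(E, M), hEM⟩, ⟨(G, N), hGN⟩), (⟨(M, F), hMF⟩, ⟨(N, H), hNH⟩))
      = if P = (⟨(E, F), hEM.trans hMF⟩, ⟨(G, H), hGN.trans hNH⟩) then 1 else 0 := by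
  obtain ⟨⟨⟨A, B⟩, hAB⟩, ⟨⟨C, D⟩, hCD⟩⟩ := P
  simp only [comul2, Finsupp.lsum_single, LinearMap.toSpanSingleton_apply, one_smul,
    Finsupp.finsetSum_apply, Finsupp.single_apply, Prod.mk.injEq, Subtype.mk.injEq]
  by_cases hP : (A = E ∧ B = F) ∧ C = G ∧ D = H
  · obtain ⟨⟨rfl, rfl⟩, rfl, rfl⟩ := hP
    rw [Finset.sum_eq_single_of_mem ⟨M, Finset.mem_Icc.2 ⟨hEM, hMF⟩⟩ (Finset.mem_attach _ _),
      Finset.sum_eq_single_of_mem ⟨N, Finset.mem_Icc.2 ⟨hGN, hNH⟩⟩ (Finset.mem_attach _ _)]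
    · simp
    · rintro y - hy
      rw [if_neg fun h => hy (Subtype.ext h.1.2.2)]
    · rintro x - hx
      exact Finset.sum_eq_zero fun y _ => if_neg fun h => hx (Subtype.ext h.1.1.2)
  · rw [if_neg hP]
    exact Finset.sum_eq_zero fun x _ => Finset.sum_eq_zero fun y _ => if_neg fun h =>
      hP ⟨⟨h.1.1.1, h.2.1.2⟩, h.1.2.1, h.2.2.2⟩

theorem comul2_apply (v : Inc2 K X) {E M F G N H : X} (hEM : E ≤ M) (hMF : M ≤ F)
    (hGN : G ≤ N) (hNH : N ≤ H) :
    comul2 v ((⟨(E, M), hEM⟩, ⟨(G, N), hGN⟩), (⟨(M, F), hMF⟩, ⟨(N, H), hNH⟩))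
      = v (⟨(E, F), hEM.trans hMF⟩, ⟨(G, H), hGN.trans hNH⟩) := by
  have : Finsupp.lapply (R := K)
        (((⟨(E, M), hEM⟩, ⟨(G, N), hGN⟩), (⟨(M, F), hMF⟩, ⟨(N, H), hNH⟩)) :
          (Y X × Y X) × (Y X × Y X)) ∘ₗ comul2
      = Finsupp.lapply ((⟨(E, F), hEM.trans hMF⟩, ⟨(G, H), hGN.trans hNH⟩) : Y X × Y X) := by
    refine Finsupp.lhom_ext fun P k => ?_
    rw [← mul_one k, ← smul_eq_mul, ← Finsupp.smul_single]
    simp only [LinearMap.comp_apply, map_smul, Finsupp.lapply_apply, comul2_single_apply,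
      Finsupp.single_apply]
  exact LinearMap.congr_fun this v

end TensorMaps

section Swap

variable {K X : Type} [Field K] [PartialOrder X] {r : Inc2 K X →ₗ[K] Inc2 K X}
  {lt rt : X → X → X}

noncomputable def swap2 : Inc2 K X ≃ₗ[K] Inc2 K X :=
  Finsupp.domLCongr (Equiv.prodComm (Y X) (Y X))

noncomputable def swap4 : Inc4 K X ≃ₗ[K] Inc4 K X :=
  Finsupp.domLCongr ((Equiv.prodComm (Y X) (Y X)).prodCongr (Equiv.prodComm (Y X) (Y X)))

noncomputable def conjSwap (r : Inc2 K X →ₗ[K] Inc2 K X) : Inc2 K X →ₗ[K] Inc2 K X :=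
  swap2.toLinearMap ∘ₗ r ∘ₗ swap2.toLinearMap

theorem swap2_single (P : Y X × Y X) (k : K) : swap2 (single P k) = single P.swap k := by
  simp [swap2]

theorem swap2_apply (v : Inc2 K X) (Q : Y X × Y X) : swap2 v Q = v Q.swap := by
  simp [swap2]

theorem Induces.conjSwap (hind : Induces r lt rt) :
    Induces (conjSwap r) (fun a c => rt c a) (fun a c => lt c a) := fun a c => by
  simp [BraidPaper.conjSwap, swap2_single, hind c a]

theorem lam_conjSwap [@DecidableRel X X (· ≤ ·)] (a b c d e f g h : X) :
    lam (conjSwap r) a b c d e f g h = lam r c d a b g h e f := by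
  unfold lam
  by_cases hab : a ≤ b <;> by_cases hcd : c ≤ d <;> by_cases hef : e ≤ f <;>
    by_cases hgh : g ≤ h <;> simp [hab, hcd, hef, hgh, conjSwap, swap2_single, swap2_apply]

theorem comul2_swap2 [LocallyFiniteOrder X] (v : Inc2 K X) : comul2 (swap2 v) = swap4 (comul2 v) := by
  refine LinearMap.congr_fun (Finsupp.lhom_ext (φ := comul2 ∘ₗ swap2.toLinearMap)
    (ψ := swap4.toLinearMap ∘ₗ comul2) fun P k => ?_) v
  simp [swap2_single, comul2, swap4, map_sum]
  rw [Finset.sum_comm]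

variable [DecidableEq X]

theorem eps2_swap2 (v : Inc2 K X) : eps2 (swap2 v) = eps2 v := by
  refine LinearMap.congr_fun (Finsupp.lhom_ext (φ := eps2 ∘ₗ swap2.toLinearMap) fun P k => ?_) v
  simp [swap2_single, eps2, and_comm]

theorem tmap_conjSwap (v : Inc4 K X) :
    tmap (conjSwap r) (conjSwap r) v = swap4 (tmap r r (swap4 v)) := by
  refine LinearMap.congr_fun (Finsupp.lhom_ext (φ := tmap (conjSwap r) (conjSwap r))
    (ψ := swap4.toLinearMap ∘ₗ tmap r r ∘ₗ swap4.toLinearMap) fun P k => ?_) v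
  ext ⟨Q₁, Q₂⟩
  simp [tmap_single_apply, swap4, conjSwap, swap2_single, swap2_apply]

variable [LocallyFiniteOrder X]

theorem IsCoalgAuto.conjSwap (hca : IsCoalgAuto r) : IsCoalgAuto (conjSwap r) := by
  refine ⟨swap2.bijective.comp (hca.1.comp swap2.bijective), LinearMap.ext fun v => ?_,
    LinearMap.ext fun v => ?_⟩
  · have h := LinearMap.congr_fun hca.2.1
    simp only [LinearMap.comp_apply] at h ⊢
    rw [tmap_conjSwap]
    simp only [BraidPaper.conjSwap, LinearMap.comp_apply, LinearEquiv.coe_coe, comul2_swap2, h]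
  · have h := LinearMap.congr_fun hca.2.2
    simp only [LinearMap.comp_apply] at h
    simp only [BraidPaper.conjSwap, LinearMap.comp_apply, LinearEquiv.coe_coe, eps2_swap2, h]

end Swap

section CoalgebraAutomorphism

variable {K X : Type} [Field K] [PartialOrder X] [DecidableEq X] [LocallyFiniteOrder X]
  {r : Inc2 K X →ₗ[K] Inc2 K X} {lt rt : X → X → X}

abbrev diagPt (a c : X) : Y X × Y X := (⟨(a, a), le_rfl⟩, ⟨(c, c), le_rfl⟩)

theorem Induces.r0map_injective (hind : Induces r lt rt) (hca : IsCoalgAuto r) :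
    Function.Injective (r0map lt rt) := by
  rintro ⟨a, c⟩ ⟨a', c'⟩ h
  simp only [r0map, Prod.mk.injEq] at h
  have h' : r (single (diagPt a c) 1) = r (single (diagPt a' c') 1) := by
    rw [hind, hind]
    simp only [h]
  have := Finsupp.single_left_injective (one_ne_zero (α := K)) (hca.1.1 h')
  simp only [Prod.mk.injEq, Subtype.mk.injEq] at this
  exact Prod.ext this.1.1 this.2.1

variable [@DecidableRel X X (· ≤ ·)]

theorem IsCoalgAuto.lam_eq_sum_mul_lam (hca : IsCoalgAuto r) {A B C D E M F G N H : X}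
    (hAB : A ≤ B) (hCD : C ≤ D) (hEM : E ≤ M) (hMF : M ≤ F) (hGN : G ≤ N) (hNH : N ≤ H) :
    lam r A B C D E F G H = ∑ x ∈ Finset.Icc A B, ∑ y ∈ Finset.Icc C D,
      lam r A x C y E M G N * lam r x B y D M F N H := by
  have h := congrArg (· ((⟨(E, M), hEM⟩, ⟨(G, N), hGN⟩), (⟨(M, F), hMF⟩, ⟨(N, H), hNH⟩)))
    (LinearMap.congr_fun hca.2.1 (single (⟨(A, B), hAB⟩, ⟨(C, D), hCD⟩) 1))
  rw [LinearMap.comp_apply, LinearMap.comp_apply, comul2_apply] at h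
  simp only [comul2, Finsupp.lsum_single, LinearMap.toSpanSingleton_apply, one_smul, map_sum,
    Finsupp.finsetSum_apply, tmap_single_apply] at h
  rw [lam_of_le r hAB hCD (hEM.trans hMF) (hGN.trans hNH), h,
    ← Finset.sum_attach (Finset.Icc A B)]
  refine Finset.sum_congr rfl fun x _ => ?_
  rw [← Finset.sum_attach (Finset.Icc C D)]
  refine Finset.sum_congr rfl fun y _ => ?_
  have hx := Finset.mem_Icc.1 x.2
  have hy := Finset.mem_Icc.1 y.2
  rw [lam_of_le r hx.1 hy.1 hEM hGN, lam_of_le r hx.2 hy.2 hMF hNH, one_mul]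

theorem IsCoalgAuto.sum_lam_diag (hca : IsCoalgAuto r) {A B C D : X} (hAB : A ≤ B)
    (hCD : C ≤ D) (W : Finset (X × X))
    (hW : ∀ p : X × X, lam r A B C D p.1 p.1 p.2 p.2 ≠ 0 → p ∈ W) :
    ∑ p ∈ W, lam r A B C D p.1 p.1 p.2 p.2
      = (if A = B then 1 else 0) * (if C = D then 1 else 0) := by
  have h := LinearMap.congr_fun hca.2.2 (single (⟨(A, B), hAB⟩, ⟨(C, D), hCD⟩) 1)
  rw [LinearMap.comp_apply, eps2_apply, eps2_apply, Finsupp.support_single _ one_ne_zero,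
    Finset.sum_singleton, Finsupp.single_eq_same] at h
  rw [ite_zero_mul_ite_zero, mul_one, ← h]
  refine Finset.sum_bij_ne_zero (fun p _ _ => diagPt p.1 p.2)
    (fun p _ hp => ?_) (fun p _ _ q _ _ hpq => ?_) (fun Q _ hQ => ?_) (fun p _ _ => ?_)
  · rwa [Finsupp.mem_support_iff, ← lam_of_le]
  · simp only [Prod.mk.injEq, Subtype.mk.injEq] at hpq
    exact Prod.ext hpq.1.1 hpq.2.1
  · obtain ⟨⟨⟨E, E'⟩, hE⟩, ⟨⟨G, G'⟩, hG⟩⟩ := Q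
    split_ifs at hQ with hdiag
    · obtain ⟨rfl, rfl⟩ : E = E' ∧ G = G' := hdiag
      refine ⟨(E, G), hW _ ?_, ?_, rfl⟩ <;> rwa [lam_of_le r hAB hCD le_rfl le_rfl]
    · exact absurd rfl hQ
  · rw [if_pos ⟨rfl, rfl⟩, lam_of_le r hAB hCD le_rfl le_rfl]

theorem IsCoalgAuto.exists_lam_mul_lam_ne_zero (hca : IsCoalgAuto r) {A B C D E M F G N H : X}
    (hEM : E ≤ M) (hMF : M ≤ F) (hGN : G ≤ N) (hNH : N ≤ H) (hne : lam r A B C D E F G H ≠ 0) :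
    ∃ x ∈ Finset.Icc A B, ∃ y ∈ Finset.Icc C D,
      lam r A x C y E M G N ≠ 0 ∧ lam r x B y D M F N H ≠ 0 := by
  obtain ⟨hAB, hCD, -, -⟩ := le_of_lam_ne_zero hne
  rw [hca.lam_eq_sum_mul_lam hAB hCD hEM hMF hGN hNH] at hne
  obtain ⟨x, hx, hx'⟩ := Finset.exists_ne_zero_of_sum_ne_zero hne
  obtain ⟨y, hy, hxy⟩ := Finset.exists_ne_zero_of_sum_ne_zero hx'
  exact ⟨x, hx, y, hy, left_ne_zero_of_mul hxy, right_ne_zero_of_mul hxy⟩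

theorem exists_lam_diag (hca : IsCoalgAuto r) (hind : Induces r lt rt) {A B C D E G : X}
    (hne : lam r A B C D E E G G ≠ 0) :
    ∃ x ∈ Finset.Icc A B, ∃ w ∈ Finset.Icc C D, E = lt x w ∧ G = rt x w := by
  induction hn : (Finset.Icc A B).card + (Finset.Icc C D).card using Nat.strong_induction_on
    generalizing B D with
  | _ n ih =>
    obtain ⟨hAB, hCD, -, -⟩ := le_of_lam_ne_zero hne
    obtain ⟨x, hx, y, hy, hleft, hright⟩ :=
      hca.exists_lam_mul_lam_ne_zero le_rfl le_rfl le_rfl le_rfl hne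
    rw [Finset.mem_Icc] at hx hy
    by_cases hlast : x = B ∧ y = D
    · obtain ⟨rfl, rfl⟩ := hlast
      rw [hind.lam_eq, Ne, ite_eq_right_iff, not_forall] at hright
      obtain ⟨⟨hE, -, hG, -⟩, -⟩ := hright
      exact ⟨x, Finset.mem_Icc.2 hx, y, Finset.mem_Icc.2 hy, hE, hG⟩
    · have hlt : (Finset.Icc A x).card + (Finset.Icc C y).card < n := by
        rw [← hn]
        rcases not_and_or.1 hlast with hxB | hyD
        · exact add_lt_add_of_lt_of_le (Finset.card_lt_card
            (Finset.Icc_ssubset_Icc_right hAB le_rfl (lt_of_le_of_ne hx.2 hxB)))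
            (Finset.card_le_card (Finset.Icc_subset_Icc_right hy.2))
        · exact add_lt_add_of_le_of_lt
            (Finset.card_le_card (Finset.Icc_subset_Icc_right hx.2)) (Finset.card_lt_card
            (Finset.Icc_ssubset_Icc_right hCD le_rfl (lt_of_le_of_ne hy.2 hyD)))
      obtain ⟨x', hx', w, hw, hE, hG⟩ := ih _ hlt hleft rfl
      exact ⟨x', Finset.Icc_subset_Icc_right hx.2 hx', w, Finset.Icc_subset_Icc_right hy.2 hw,
        hE, hG⟩

theorem exists_lam_support (hca : IsCoalgAuto r) (hind : Induces r lt rt) {A B C D E F G H : X}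
    (hne : lam r A B C D E F G H ≠ 0) :
    ∃ x ∈ Finset.Icc A B, ∃ x' ∈ Finset.Icc x B, ∃ w ∈ Finset.Icc C D, ∃ w' ∈ Finset.Icc w D,
      E = lt x w ∧ G = rt x w ∧ F = lt x' w' ∧ H = rt x' w' := by
  obtain ⟨-, -, hEF, hGH⟩ := le_of_lam_ne_zero hne
  obtain ⟨x₀, hx₀, y₀, hy₀, h₁, h₂⟩ := hca.exists_lam_mul_lam_ne_zero le_rfl hEF le_rfl hGH hne
  obtain ⟨x₁, hx₁, y₁, hy₁, -, h₃⟩ := hca.exists_lam_mul_lam_ne_zero hEF le_rfl hGH le_rfl h₂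
  obtain ⟨x, hx, w, hw, hE, hG⟩ := exists_lam_diag hca hind h₁
  obtain ⟨x', hx', w', hw', hF, hH⟩ := exists_lam_diag hca hind h₃
  simp only [Finset.mem_Icc] at *
  exact ⟨x, ⟨hx.1, hx.2.trans hx₀.2⟩, x', ⟨hx.2.trans (hx₁.1.trans hx'.1), hx'.2⟩,
    w, ⟨hw.1, hw.2.trans hy₀.2⟩, w', ⟨hw.2.trans (hy₁.1.trans hw'.1), hw'.2⟩, hE, hG, hF, hH⟩

theorem exists_lam_ne_zero_of_ne (hca : IsCoalgAuto r) (hind : Induces r lt rt) {A B C D : X}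
    (hAB : A ≤ B) (hCD : C ≤ D) (hne : A ≠ B ∨ C ≠ D) :
    ∃ E F G H, (E ≠ F ∨ G ≠ H) ∧ lam r A B C D E F G H ≠ 0 := by
  by_contra! hdiag
  set P : Y X × Y X := (⟨(A, B), hAB⟩, ⟨(C, D), hCD⟩)
  set v := r (single P 1)
  -- otherwise `v` would be `r` of a combination of the basis elements `(x,x) ⊗ (w,w)`
  have hsupp : ∀ Q ∈ v.support, ∃ p : X × X, Q = diagPt (lt p.1 p.2) (rt p.1 p.2) := by
    rintro ⟨⟨⟨E, F⟩, hEF⟩, ⟨⟨G, H⟩, hGH⟩⟩ hQ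
    rw [Finsupp.mem_support_iff, ← lam_of_le] at hQ
    obtain ⟨rfl, rfl⟩ : E = F ∧ G = H := by
      by_contra h
      exact hQ (hdiag E F G H (by tauto))
    obtain ⟨x, -, w, -, rfl, rfl⟩ := exists_lam_diag hca hind hQ
    exact ⟨(x, w), rfl⟩
  have : Nonempty X := ⟨A⟩
  choose! pre hpre using hsupp
  have hv : v = r (∑ Q ∈ v.support, v Q • single (diagPt (pre Q).1 (pre Q).2) 1) := by
    simp only [map_sum, map_smul]
    refine (Finsupp.sum_single v).symm.trans (Finset.sum_congr rfl fun Q hQ => ?_)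
    rw [hind, Finsupp.smul_single, smul_eq_mul, mul_one]
    exact congrArg (single · (v Q)) (hpre Q hQ)
  have h := congrArg (· P) (hca.1.1 hv)
  simp only [Finsupp.single_eq_same, Finsupp.finsetSum_apply, Finsupp.smul_apply,
    Finsupp.single_apply, smul_eq_mul] at h
  rw [Finset.sum_eq_zero fun Q _ => by rw [if_neg, mul_zero]; grind] at h
  exact one_ne_zero h

end CoalgebraAutomorphism

section Translations

variable {K X : Type} [Field K] [PartialOrder X] [DecidableEq X] [@DecidableRel X X (· ≤ ·)]
  [LocallyFiniteOrder X] {r : Inc2 K X →ₗ[K] Inc2 K X} {lt rt : X → X → X}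

theorem lt_apply_eq_of_covBy (hca : IsCoalgAuto r) (hind : Induces r lt rt)
    (hnd0 : NonDeg0 lt rt) {a b : X} (hab : a ⋖ b) (w : X) : lt a w = lt b w := by
  have hww : ∀ {t}, t ∈ Finset.Icc w w → t = w := fun ht => by simpa using ht
  obtain ⟨E, F, G, H, hoff, hne⟩ :=
    exists_lam_ne_zero_of_ne hca hind hab.le (le_refl w) (Or.inl hab.ne)
  obtain ⟨x, hx, x', hx', w₁, hw₁, w₂, hw₂, hE, hG, hF, hH⟩ := exists_lam_support hca hind hne
  obtain rfl := hww hw₁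
  obtain rfl := hww (Finset.Icc_subset_Icc_right (Finset.mem_Icc.1 hw₁).2 hw₂)
  rw [Finset.mem_Icc] at hx hx'
  obtain ⟨rfl, rfl⟩ : x = a ∧ x' = b := by
    have hxx' : x ≠ x' := by
      rintro rfl
      exact hoff.elim (· (hE.trans hF.symm)) (· (hG.trans hH.symm))
    rcases hab.eq_or_eq hx.1 hx.2 with rfl | rfl
    · rcases hab.eq_or_eq (hx.1.trans hx'.1) hx'.2 with rfl | rfl
      · exact absurd rfl hxx'
      · exact ⟨rfl, rfl⟩
    · exact absurd (le_antisymm hx'.1 hx'.2) hxx'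
  -- now `(E,G) = r₀(a,w)` and `(F,H) = r₀(b,w)`; splitting through `(E,H)` gives `E = ᵇw`
  obtain ⟨-, -, hEF, hGH⟩ := le_of_lam_ne_zero hne
  obtain ⟨y, -, z, hz, hsplit, -⟩ := hca.exists_lam_mul_lam_ne_zero le_rfl hEF hGH le_rfl hne
  obtain ⟨-, -, x₃, -, w₃, hw₃, w₄, hw₄, -, -, hE₃, hH₃⟩ := exists_lam_support hca hind hsplit
  obtain rfl := hww hz
  obtain rfl := hww hw₃
  obtain rfl := hww hw₄
  obtain rfl : x₃ = x' := (hnd0.2 _).injective (hH₃.symm.trans hH)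
  exact hE.symm.trans hE₃

theorem lt_eq_of_le (hca : IsCoalgAuto r) (hind : Induces r lt rt) (hnd0 : NonDeg0 lt rt)
    {a b : X} (hab : a ≤ b) : lt a = lt b := by
  have hchain := le_iff_reflTransGen_covBy.1 hab
  clear hab
  induction hchain with
  | refl => rfl
  | tail _ hcov ih => exact ih.trans (funext (lt_apply_eq_of_covBy hca hind hnd0 hcov))

theorem monotone_lt (hca : IsCoalgAuto r) (hind : Induces r lt rt) (b : X) : Monotone (lt b) := by
  refine (monotone_iff_forall_covBy _).2 fun u v huv => ?_
  obtain ⟨E, F, G, H, hoff, hne⟩ :=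
    exists_lam_ne_zero_of_ne hca hind (le_refl b) huv.le (Or.inr huv.ne)
  obtain ⟨x, hx, x', hx', w, hw, w', hw', hE, hG, hF, hH⟩ := exists_lam_support hca hind hne
  obtain ⟨-, -, hEF, -⟩ := le_of_lam_ne_zero hne
  obtain rfl : x = b := by simpa using hx
  obtain rfl : x' = x := by simpa using hx'
  rw [Finset.mem_Icc] at hw hw'
  obtain ⟨rfl, rfl⟩ : w = u ∧ w' = v := by
    have hww' : w ≠ w' := by
      rintro rfl
      exact hoff.elim (· (hE.trans hF.symm)) (· (hG.trans hH.symm))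
    rcases huv.eq_or_eq hw.1 hw.2 with rfl | rfl
    · rcases huv.eq_or_eq (hw.1.trans hw'.1) hw'.2 with rfl | rfl
      · exact absurd rfl hww'
      · exact ⟨rfl, rfl⟩
    · exact absurd (le_antisymm hw'.1 hw'.2) hww'
  rwa [← hE, ← hF]

theorem le_of_lt_le_lt (hca : IsCoalgAuto r) (hind : Induces r lt rt) (hnd0 : NonDeg0 lt rt)
    {b u v : X} (h : lt b u ≤ lt b v) : u ≤ v := by
  set T : Y X × Y X := (⟨(lt b u, lt b v), h⟩, ⟨(rt b u, rt b u), le_rfl⟩)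
  obtain ⟨v₀, hv₀⟩ := hca.1.2 (single T 1)
  obtain ⟨⟨⟨⟨A, B⟩, hAB⟩, ⟨⟨C, D⟩, hCD⟩⟩, -, hP⟩ :
      ∃ P ∈ v₀.support, v₀ P * r (single P 1) T ≠ 0 := by
    refine Finset.exists_ne_zero_of_sum_ne_zero (ne_of_eq_of_ne ?_ one_ne_zero)
    rw [← apply_eq_sum_mul_apply_single, hv₀, Finsupp.single_eq_same]
  rw [← lam_of_le] at hP
  obtain ⟨x, -, x', hx', w, -, w', hw', hE, hG, hF, hH⟩ :=
    exists_lam_support hca hind (right_ne_zero_of_mul hP)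
  obtain ⟨rfl, rfl⟩ := Prod.mk.inj (hind.r0map_injective hca (Prod.ext hE hG))
  rw [← lt_eq_of_le hca hind hnd0 (Finset.mem_Icc.1 hx').1] at hF
  rw [(hnd0.1 _).injective hF]
  exact (Finset.mem_Icc.1 hw').1

theorem lt_le_lt_iff (hca : IsCoalgAuto r) (hind : Induces r lt rt) (hnd0 : NonDeg0 lt rt)
    {b u v : X} : lt b u ≤ lt b v ↔ u ≤ v :=
  ⟨le_of_lt_le_lt hca hind hnd0, fun h => monotone_lt hca hind b h⟩

theorem rt_eq_of_le (hca : IsCoalgAuto r) (hind : Induces r lt rt) (hnd0 : NonDeg0 lt rt)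
    {c w : X} (hcw : c ≤ w) (a : X) : rt a c = rt a w :=
  congrFun (lt_eq_of_le hca.conjSwap hind.conjSwap hnd0.swap hcw) a

theorem rt_le_rt_iff (hca : IsCoalgAuto r) (hind : Induces r lt rt) (hnd0 : NonDeg0 lt rt)
    {c u v : X} : rt u c ≤ rt v c ↔ u ≤ v :=
  lt_le_lt_iff hca.conjSwap hind.conjSwap hnd0.swap

end Translations

section BraidSums

variable {K X : Type} [Field K] [PartialOrder X] [DecidableEq X] [@DecidableRel X X (· ≤ ·)]
  [LocallyFiniteOrder X] {r : Inc2 K X →ₗ[K] Inc2 K X} {lt rt : X → X → X}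

theorem sum_sum_lam_lt_rt (hca : IsCoalgAuto r) (hind : Induces r lt rt) (hnd0 : NonDeg0 lt rt)
    (A B C D : X) :
    ∑ x ∈ Finset.Icc A B, ∑ w ∈ Finset.Icc C D,
        lam r A B C D (lt A w) (lt A w) (rt x C) (rt x C)
      = (if A = B then 1 else 0) * (if C = D then 1 else 0) := by
  by_cases hAB : A ≤ B
  · by_cases hCD : C ≤ D
    · have hW : ∀ p : X × X, lam r A B C D p.1 p.1 p.2 p.2 ≠ 0 →
          p ∈ (Finset.Icc A B ×ˢ Finset.Icc C D).image fun q => (lt A q.2, rt q.1 C) := by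
        rintro ⟨E, G⟩ hne
        obtain ⟨x, hx, w, hw, rfl, rfl⟩ := exists_lam_diag hca hind hne
        refine Finset.mem_image.2 ⟨(x, w), Finset.mem_product.2 ⟨hx, hw⟩, ?_⟩
        rw [lt_eq_of_le hca hind hnd0 (Finset.mem_Icc.1 hx).1,
          rt_eq_of_le hca hind hnd0 (Finset.mem_Icc.1 hw).1]
      rw [← hca.sum_lam_diag hAB hCD _ hW, Finset.sum_image, Finset.sum_product]
      rintro ⟨x, w⟩ - ⟨x', w'⟩ - h
      simp only [Prod.mk.injEq] at h
      exact Prod.ext ((hnd0.2 C).injective h.2) ((hnd0.1 A).injective h.1)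
    · rw [Finset.Icc_eq_empty hCD, if_neg (show C ≠ D from fun h => hCD h.le)]
      simp
  · rw [Finset.Icc_eq_empty hAB, if_neg fun h => hAB h.le]
    simp

theorem sum_sum_LBE_third_factor (hca : IsCoalgAuto r) (hind : Induces r lt rt)
    (hnd0 : NonDeg0 lt rt) (hbr0 : Braid0 (r0map lt rt)) {a c e x w u : X} (hax : a ≤ x)
    (hcw : c ≤ w) (heu : e ≤ u) (z v : X) :
    ∑ i ∈ Finset.Icc w z, ∑ k ∈ Finset.Icc u v,
      lam r (lt a w) (lt a z) (lt (rt x c) u) (lt (rt x c) v) (lt a (lt c k)) (lt a (lt c k))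
        (rt (lt a i) (lt (rt a i) e)) (rt (lt a i) (lt (rt a i) e))
      = (if w = z then 1 else 0) * (if u = v then 1 else 0) := by
  have hx : lt (rt x c) = lt (rt a c) :=
    (lt_eq_of_le hca hind hnd0 ((rt_le_rt_iff hca hind hnd0).2 hax)).symm
  have hw : lt (lt a w) = lt (lt a c) :=
    (lt_eq_of_le hca hind hnd0 (monotone_lt hca hind a hcw)).symm
  calc _ = ∑ i ∈ Finset.Icc w z, ∑ k ∈ Finset.Icc u v,
        lam r (lt a w) (lt a z) (lt (rt x c) u) (lt (rt x c) v)
          (lt (lt a w) (lt (rt x c) k)) (lt (lt a w) (lt (rt x c) k))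
          (rt (lt a i) (lt (rt x c) u)) (rt (lt a i) (lt (rt x c) u)) := by
        refine Finset.sum_congr rfl fun i hi => Finset.sum_congr rfl fun k _ => ?_
        have hi : rt a i = rt a c :=
          (rt_eq_of_le hca hind hnd0 (hcw.trans (Finset.mem_Icc.1 hi).1) a).symm
        rw [hx, hw, lt_lt_rt_eq hbr0, hi, rt_eq_of_le hca hind hnd0 (monotone_lt hca hind _ heu)]
    _ = ∑ n ∈ Finset.Icc (lt a w) (lt a z), ∑ m ∈ Finset.Icc (lt (rt x c) u) (lt (rt x c) v),
        lam r (lt a w) (lt a z) (lt (rt x c) u) (lt (rt x c) v) (lt (lt a w) m) (lt (lt a w) m)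
          (rt n (lt (rt x c) u)) (rt n (lt (rt x c) u)) := by
        rw [sum_Icc_comp (hnd0.1 a) (lt_le_lt_iff hca hind hnd0)]
        refine Finset.sum_congr rfl fun i _ => ?_
        rw [sum_Icc_comp (hnd0.1 _) (lt_le_lt_iff hca hind hnd0)]
    _ = _ := by
        simp only [sum_sum_lam_lt_rt hca hind hnd0, (hnd0.1 a).injective.eq_iff,
          (hnd0.1 _).injective.eq_iff]

theorem sum_sum_LBE_second_factor (hca : IsCoalgAuto r) (hind : Induces r lt rt)
    (hnd0 : NonDeg0 lt rt) (c e f x y : X) :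
    ∑ u ∈ Finset.Icc e f, ∑ g ∈ Finset.Icc x y,
      lam r (rt x c) (rt y c) e f (lt (rt x c) u) (lt (rt x c) u) (rt (rt g c) e) (rt (rt g c) e)
      = (if x = y then 1 else 0) * (if e = f then 1 else 0) := by
  rw [Finset.sum_comm, ← sum_Icc_comp (hnd0.2 c) (rt_le_rt_iff hca hind hnd0)
    (fun n => ∑ u ∈ Finset.Icc e f, lam r (rt x c) (rt y c) e f (lt (rt x c) u) (lt (rt x c) u)
      (rt n e) (rt n e)), sum_sum_lam_lt_rt hca hind hnd0]
  simp only [(hnd0.2 c).injective.eq_iff]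

theorem sum_LBE_singletons (hca : IsCoalgAuto r) (hind : Induces r lt rt) (hnd0 : NonDeg0 lt rt)
    (hbr0 : Braid0 (r0map lt rt)) (a b c d e f : X) :
    ∑ g ∈ Finset.Icc a b, ∑ i ∈ Finset.Icc c d, ∑ k ∈ Finset.Icc e f,
        LBE r lt rt a b c d e f g g i i k k
      = (if a = b then 1 else 0) * (if c = d then 1 else 0) * (if e = f then 1 else 0) := by
  simp only [LBE]
  rw [sum_Icc_nested3]
  simp only [← Finset.mul_sum, ← Finset.sum_mul]
  calc _ = ∑ x ∈ Finset.Icc a b, ∑ y ∈ Finset.Icc x b, ∑ w ∈ Finset.Icc c d,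
        ∑ u ∈ Finset.Icc e f, lam r a b c d (lt a w) (lt a w) (rt x c) (rt y c) *
          ∑ g ∈ Finset.Icc x y, lam r (rt x c) (rt y c) e f (lt (rt x c) u) (lt (rt x c) u)
            (rt (rt g c) e) (rt (rt g c) e) := by
        refine Finset.sum_congr rfl fun x hx => Finset.sum_congr rfl fun y _ =>
          Finset.sum_congr rfl fun w hw => ?_
        rw [Finset.mem_Icc] at hx hw
        calc _ = ∑ z ∈ Finset.Icc w d, (∑ u ∈ Finset.Icc e f, ∑ v ∈ Finset.Icc u f,
              (lam r a b c d (lt a w) (lt a z) (rt x c) (rt y c) *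
                ∑ g ∈ Finset.Icc x y, lam r (rt x c) (rt y c) e f (lt (rt x c) u)
                  (lt (rt x c) v) (rt (rt g c) e) (rt (rt g c) e)) *
                (if u = v then 1 else 0)) * (if w = z then 1 else 0) := by
              simp only [Finset.sum_mul]
              refine Finset.sum_congr rfl fun z _ => Finset.sum_congr rfl fun u hu =>
                Finset.sum_congr rfl fun v _ => ?_
              rw [sum_sum_LBE_third_factor hca hind hnd0 hbr0 hx.1 hw.1 (Finset.mem_Icc.1 hu).1]
              ring
          _ = _ := by
              rw [sum_Icc_mul_ite hw.2]
              exact Finset.sum_congr rfl fun u hu => sum_Icc_mul_ite (Finset.mem_Icc.1 hu).2 _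
    _ = ∑ x ∈ Finset.Icc a b, ∑ y ∈ Finset.Icc x b, ∑ w ∈ Finset.Icc c d,
        lam r a b c d (lt a w) (lt a w) (rt x c) (rt y c) * (if e = f then 1 else 0) *
          (if x = y then 1 else 0) := by
        refine Finset.sum_congr rfl fun x _ => Finset.sum_congr rfl fun y _ =>
          Finset.sum_congr rfl fun w _ => ?_
        rw [← Finset.mul_sum, sum_sum_LBE_second_factor hca hind hnd0]
        ring
    _ = _ := by
        simp only [← Finset.sum_mul]
        rw [Finset.sum_congr rfl fun x hx => sum_Icc_mul_ite (Finset.mem_Icc.1 hx).2 _,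
          ← Finset.sum_mul, sum_sum_lam_lt_rt hca hind hnd0]

end BraidSums

theorem RBE_eq_LBE_conjSwap {K X : Type} [Field K] [PartialOrder X] [@DecidableRel X X (· ≤ ·)]
    [LocallyFiniteOrder X] (r : Inc2 K X →ₗ[K] Inc2 K X) (lt rt : X → X → X)
    (a b c d e f g h i j k l : X) :
    RBE r lt rt a b c d e f g h i j k l
      = LBE (conjSwap r) (fun a c => rt c a) (fun a c => lt c a) e f c d a b k l i j g h := by
  simp only [RBE, LBE, lam_conjSwap]
  simp only [← Finset.sum_product']
  refine Finset.sum_nbij' (fun p => (p.2.2.2.2.1, p.2.2.2.2.2, p.2.2.1, p.2.2.2.1, p.1, p.2.1))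
    (fun p => (p.2.2.2.2.1, p.2.2.2.2.2, p.2.2.1, p.2.2.2.1, p.1, p.2.1)) ?_ ?_
    (fun _ _ => rfl) (fun _ _ => rfl) (fun _ _ => rfl)
  all_goals
    intro p
    simp only [Finset.mem_product]
    tauto

theorem statement0_general {K X : Type} [Field K] [PartialOrder X] [DecidableEq X]
    [@DecidableRel X X (· ≤ ·)] [LocallyFiniteOrder X]
    (r : Inc2 K X →ₗ[K] Inc2 K X) (lt rt : X → X → X)
    (hca : IsCoalgAuto r)
    (hind : Induces r lt rt) (hnd0 : NonDeg0 lt rt) (hbr0 : Braid0 (r0map lt rt)) :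
    ∀ a b c d e f : X, a ≤ b → c ≤ d → e ≤ f →
      ((∑ g ∈ Finset.Icc a b, ∑ i ∈ Finset.Icc c d, ∑ k ∈ Finset.Icc e f,
          LBE r lt rt a b c d e f g g i i k k)
        = (if a = b then (1 : K) else 0) * (if c = d then 1 else 0) *
            (if e = f then 1 else 0)) ∧
      ((∑ g ∈ Finset.Icc a b, ∑ i ∈ Finset.Icc c d, ∑ k ∈ Finset.Icc e f,
          RBE r lt rt a b c d e f g g i i k k)
        = (if a = b then (1 : K) else 0) * (if c = d then 1 else 0) *
            (if e = f then 1 else 0)) := by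
  intro a b c d e f _ _ _
  refine ⟨sum_LBE_singletons hca hind hnd0 hbr0 a b c d e f, ?_⟩
  simp only [RBE_eq_LBE_conjSwap]
  rw [Finset.sum_comm, Finset.sum_congr rfl fun _ _ => Finset.sum_comm, Finset.sum_comm,
    sum_LBE_singletons hca.conjSwap hind.conjSwap hnd0.swap hbr0.swap]
  ring

/-- for a non-degenerate coalgebra automorphism `r` of `D ⊗ D`
inducing a non-degenerate set-theoretic solution `r₀` of the braid equation,
the sum of `LBE(S,T)` (resp. `RBE(S,T)`) over all singleton subintervals
`S ⊆ T` equals `δ_{a,b}·δ_{c,d}·δ_{e,f}`. -/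
theorem statement0 {K X : Type} [Field K] [PartialOrder X] [DecidableEq X]
    [@DecidableRel X X (· ≤ ·)] [LocallyFiniteOrder X]
    (r : Inc2 K X →ₗ[K] Inc2 K X) (lt rt : X → X → X)
    (hca : IsCoalgAuto r) (hnd : NonDeg r)
    (hind : Induces r lt rt) (hnd0 : NonDeg0 lt rt) (hbr0 : Braid0 (r0map lt rt)) :
    ∀ a b c d e f : X, a ≤ b → c ≤ d → e ≤ f →
      ((∑ g ∈ Finset.Icc a b, ∑ i ∈ Finset.Icc c d, ∑ k ∈ Finset.Icc e f,
          LBE r lt rt a b c d e f g g i i k k)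
        = (if a = b then (1 : K) else 0) * (if c = d then 1 else 0) *
            (if e = f then 1 else 0)) ∧
      ((∑ g ∈ Finset.Icc a b, ∑ i ∈ Finset.Icc c d, ∑ k ∈ Finset.Icc e f,
          RBE r lt rt a b c d e f g g i i k k)
        = (if a = b then (1 : K) else 0) * (if c = d then 1 else 0) *
            (if e = f then 1 else 0)) :=
  statement0_general r lt rt hca hind hnd0 hbr0

end BraidPaper
end

section
/- Assume X is connected and let r : D⊗D → D⊗D be a non-degenerate coalgebra automorphism that induces a non-degenerate set-theoretic solution r₀ of the braid equation on X×X, with translations given by the commuting poset automorphisms φ_l, φ_r. If r has set-type square up to height 1, then for h ∈ {r,l}, all a ≺ b in X and all c ∈ X: α_h(⁽¹⁾c⁽¹⁾)(⁽¹⁾a⁽¹⁾, ⁽¹⁾b⁽¹⁾) = α_h(c)(a,b) and β_h(⁽¹⁾c⁽¹⁾)(⁽¹⁾a⁽¹⁾, ⁽¹⁾b⁽¹⁾) = β_h(c)(a,b); that is, α_h and β_h are invariant under applying φ := φ_l∘φ_r to all arguments. -/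
open Finsupp

/-!
For `a ⋖ b` the basis vector `x = (a,b) ⊗ (c,c)` is skew-primitive, `Δ x = g ⊗ x + x ⊗ h` for the
grouplikes `g = (a,a) ⊗ (c,c)` and `h = (b,b) ⊗ (c,c)`, so `r x` is skew-primitive between the
grouplikes `r g = (⁽¹⁾c,⁽¹⁾c) ⊗ (a⁽¹⁾,a⁽¹⁾)` and `r h = (⁽¹⁾c,⁽¹⁾c) ⊗ (b⁽¹⁾,b⁽¹⁾)`, and it is
killed by the counit. Such an element is a combination of the interval
`(⁽¹⁾c,⁽¹⁾c) ⊗ (a⁽¹⁾,b⁽¹⁾)` and of `r g - r h`, with coefficients `α_r(c)(a,b)` and `β_r(c)(a,b)`. The interval has the same shape with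
the tensor factors exchanged, so `r` acts on it through `α_l(⁽¹⁾c)(a⁽¹⁾,b⁽¹⁾)` and
`β_l(⁽¹⁾c)(a⁽¹⁾,b⁽¹⁾)`, and comparing `r² x` with the set-type square gives
`α_r(c)(a,b) · α_l(⁽¹⁾c)(a⁽¹⁾,b⁽¹⁾) = 1` and `α_r(c)(a,b) · β_l(⁽¹⁾c)(a⁽¹⁾,b⁽¹⁾) + β_r(c)(a,b) = 0`;
symmetrically with `l` and `r` exchanged. Hence `α_r(c)(a,b)` and `α_r(⁽¹⁾c⁽¹⁾)(⁽¹⁾a⁽¹⁾,⁽¹⁾b⁽¹⁾)`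
are both inverse to `α_l(⁽¹⁾c)(a⁽¹⁾,b⁽¹⁾)`, and the second relation then identifies the `β`'s.
-/

namespace BraidPaper

section Order

variable {α : Type} [PartialOrder α]

lemma covBy_apply_of_bijective {φ : α → α} (hb : Function.Bijective φ)
    (hm : ∀ x y : α, x ≤ y ↔ φ x ≤ φ y) {a b : α} (h : a ⋖ b) : φ a ⋖ φ b :=
  (apply_covBy_apply_iff
    (RelIso.ofSurjective (OrderEmbedding.ofMapLEIff φ fun x y => (hm x y).symm) hb.2 :
      α ≃o α)).2 h

lemma hgt_self (a : α) : hgt a a = 0 := by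
  rw [hgt, Set.Icc_self,
    ← Set.encard_eq_chainHeight_of_isChain _ Set.subsingleton_singleton.isChain,
    Set.encard_singleton]
  rfl

lemma hgt_of_covBy {a b : α} (h : a ⋖ b) : hgt a b = 1 := by
  rw [hgt, h.Icc_eq, ← Set.encard_eq_chainHeight_of_isChain _ (IsChain.pair h.lt),
    Set.encard_pair h.ne]
  rfl

end Order

lemma eq_of_mul_eq_one_of_mul_add_eq_zero {R : Type*} [CommRing R] {x y p q z : R}
    (hxy : x * y = 1) (hq : x * p + q = 0) (hp : y * z + p = 0) : z = q := by
  linear_combination x * hp - z * hxy - hq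

variable {K X : Type} [Field K] [PartialOrder X]

/-- The basis vector `(u.1, w.1) ⊗ (u.2, w.2)` of `D ⊗ D`, i.e. the interval `[u, w]` of
`X × X`; `pt u` is the grouplike `(u.1, u.1) ⊗ (u.2, u.2)`. -/
def intv {u w : X × X} (h : u ≤ w) : Y X × Y X := (⟨(u.1, w.1), h.1⟩, ⟨(u.2, w.2), h.2⟩)

abbrev pt (u : X × X) : Y X × Y X := intv (le_refl u)

lemma intv_inj {u w u' w' : X × X} {h : u ≤ w} {h' : u' ≤ w'} :
    intv h = intv h' ↔ u = u' ∧ w = w' := by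
  simp only [intv, Prod.ext_iff, Subtype.ext_iff]
  tauto

lemma lam_eq_apply [@DecidableRel X X (· ≤ ·)] (r : Inc2 K X →ₗ[K] Inc2 K X)
    {u w u' w' : X × X} (h : u ≤ w) (h' : u' ≤ w') :
    lam r u.1 w.1 u.2 w.2 u'.1 w'.1 u'.2 w'.2 = r (single (intv h) 1) (intv h') := by
  simp [lam, intv, h.1, h.2, h'.1, h'.2]

noncomputable def tmul (f g : Inc2 K X) : Inc4 K X :=
  f.sum fun p a => g.sum fun q b => single (p, q) (a * b)

lemma tmul_apply (f g : Inc2 K X) (P Q : Y X × Y X) : tmul f g (P, Q) = f P * g Q := by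
  classical
  simp only [tmul, Finsupp.sum, finsetSum_apply, single_apply, Prod.mk.injEq, ite_and]
  simp only [Finset.sum_ite_eq', Finset.sum_ite_irrel, Finsupp.mem_support_iff]
  split_ifs <;> simp_all

lemma tmap_single (r s : Inc2 K X →ₗ[K] Inc2 K X) (P Q : Y X × Y X) :
    tmap r s (single (P, Q) 1) = tmul (r (single P 1)) (s (single Q 1)) := by
  simp [tmap, tmul]

lemma coeff_relations_of_apply_eq_single {r : Inc2 K X →ₗ[K] Inc2 K X} {y : Inc2 K X}
    {u w u' w' : X × X} {h : u ≤ w} {h' : u' ≤ w'} (hne : u' ≠ w') {α β α' β' : K}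
    (hy : y = α • single (intv h) 1 + β • (single (pt u) 1 - single (pt w) 1))
    (hr : r (single (intv h) 1)
      = α' • single (intv h') 1 + β' • (single (pt u') 1 - single (pt w') 1))
    (hu : r (single (pt u) 1) = single (pt u') 1) (hw : r (single (pt w) 1) = single (pt w') 1)
    (hsq : r y = single (intv h') 1) :
    α * α' = 1 ∧ α * β' + β = 0 := by
  have key : r y = (α * α') • single (intv h') (1 : K)
      + (α * β' + β) • (single (pt u') 1 - single (pt w') 1) := by
    rw [hy, map_add, map_smul, map_smul, map_sub, hr, hu, hw]
    module
  rw [hsq] at key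
  have h₁ := congrArg (· (intv h')) key
  have h₂ := congrArg (· (pt u')) key
  simp [intv_inj, hne, Ne.symm hne] at h₁ h₂
  exact ⟨h₁.symm, h₂.symm⟩

lemma eps2_single_intv [DecidableEq X] {u w : X × X} (h : u ≤ w) (k : K) :
    eps2 (single (intv h) k) = if u = w then k else 0 := by
  simp only [eps2, intv, lsum_single, Prod.ext_iff]
  split_ifs <;> rfl

variable [LocallyFiniteOrder X]

lemma comul2_single_apply_s8 (P : Y X × Y X) {u v w : X × X} (huv : u ≤ v) (hvw : v ≤ w) :
    comul2 (single P (1 : K)) (intv huv, intv hvw) = single P 1 (intv (huv.trans hvw)) := by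
  classical
  unfold intv
  rw [comul2, lsum_single, LinearMap.toSpanSingleton_apply, one_smul, finsetSum_apply]
  simp_rw [finsetSum_apply, single_apply]
  split_ifs with hP
  · subst hP
    rw [Finset.sum_eq_single ⟨v.1, Finset.mem_Icc.2 ⟨huv.1, hvw.1⟩⟩,
      Finset.sum_eq_single ⟨v.2, Finset.mem_Icc.2 ⟨huv.2, hvw.2⟩⟩, if_pos rfl]
    all_goals simp_all [Prod.ext_iff, Subtype.ext_iff]
  · refine Finset.sum_eq_zero fun x _ => Finset.sum_eq_zero fun y _ => if_neg fun h => hP ?_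
    simp_all [Prod.ext_iff, Subtype.ext_iff]

lemma comul2_apply_s8 (f : Inc2 K X) {u v w : X × X} (huv : u ≤ v) (hvw : v ≤ w) :
    comul2 f (intv huv, intv hvw) = f (intv (huv.trans hvw)) := by
  induction f using Finsupp.induction_linear with
  | zero => simp
  | add f g hf hg => simp [hf, hg]
  | single P k =>
    rw [← smul_single_one, map_smul, Finsupp.smul_apply, Finsupp.smul_apply, comul2_single_apply_s8]

lemma comul2_single_intv [@DecidableRel X X (· ≤ ·)] {u w : X × X} (h : u ≤ w) :
    comul2 (single (intv h) (1 : K)) = ∑ v ∈ Finset.Icc u w,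
      if hv : u ≤ v ∧ v ≤ w then single (intv hv.1, intv hv.2) (1 : K) else 0 := by
  unfold intv
  rw [comul2, lsum_single, LinearMap.toSpanSingleton_apply, one_smul, Finset.Icc_prod_def,
    Finset.sum_product]
  conv_rhs => rw [← Finset.sum_attach]
  refine Finset.sum_congr rfl fun x _ => ?_
  conv_rhs => rw [← Finset.sum_attach]
  refine Finset.sum_congr rfl fun y _ => ?_
  rw [dif_pos ⟨⟨(Finset.mem_Icc.1 x.2).1, (Finset.mem_Icc.1 y.2).1⟩,
    ⟨(Finset.mem_Icc.1 x.2).2, (Finset.mem_Icc.1 y.2).2⟩⟩]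

lemma comul2_single_intv_of_covBy {u w : X × X} (h : u ⋖ w) :
    comul2 (single (intv h.le) (1 : K))
      = single (pt u, intv h.le) 1 + single (intv h.le, pt w) 1 := by
  classical
  rw [comul2_single_intv,
    (Finset.coe_inj.1 (by simpa using h.Icc_eq) : Finset.Icc u w = {u, w}),
    Finset.sum_pair h.ne, dif_pos ⟨le_rfl, h.le⟩, dif_pos ⟨h.le, le_rfl⟩]

def IsSkewPrimitive (u w : X × X) (y : Inc2 K X) : Prop :=
  comul2 y = tmul (single (pt u) 1) y + tmul y (single (pt w) 1)

lemma IsSkewPrimitive.apply_eq_zero {u w : X × X} {y : Inc2 K X} (hy : IsSkewPrimitive u w y)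
    {s t : X × X} (hst : s ≤ t) (h₁ : ¬(u = s ∧ w = t)) (h₂ : ¬(u = s ∧ u = t))
    (h₃ : ¬(w = s ∧ w = t)) : y (intv hst) = 0 := by
  classical
  have hs := congrArg (· (pt s, intv hst)) hy
  have ht := congrArg (· (intv hst, pt t)) hy
  simp only [comul2_apply_s8, Finsupp.add_apply, tmul_apply, single_apply, intv_inj] at hs ht
  by_cases hus : u = s
  · have hwt : w ≠ t := fun h => h₁ ⟨hus, h⟩
    simpa [h₂, hwt] using ht
  · simpa [hus, h₃] using hs

lemma isSkewPrimitive_apply_single {r : Inc2 K X →ₗ[K] Inc2 K X}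
    (hcm : comul2 ∘ₗ r = tmap r r ∘ₗ comul2) {x G H : Y X × Y X} {u w : X × X}
    (hx : comul2 (single x (1 : K)) = single (G, x) 1 + single (x, H) 1)
    (hG : r (single G 1) = single (pt u) 1) (hH : r (single H 1) = single (pt w) 1) :
    IsSkewPrimitive u w (r (single x 1)) := by
  rw [IsSkewPrimitive, ← LinearMap.comp_apply, hcm, LinearMap.comp_apply, hx, map_add,
    tmap_single, tmap_single, hG, hH]

variable [DecidableEq X]

lemma IsSkewPrimitive.eq_smul_add {u w : X × X} {y : Inc2 K X} (hy : IsSkewPrimitive u w y)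
    (hε : eps2 y = 0) (h : u ≤ w) (hne : u ≠ w) :
    y = y (intv h) • single (intv h) 1 + y (pt u) • (single (pt u) 1 - single (pt w) 1) := by
  have hy₃ : y = single (intv h) (y (intv h)) + single (pt u) (y (pt u))
      + single (pt w) (y (pt w)) := by
    ext P
    obtain ⟨s, t, hst, rfl⟩ : ∃ (s t : X × X) (hst : s ≤ t), P = intv hst :=
      ⟨(P.1.1.1, P.2.1.1), (P.1.1.2, P.2.1.2), ⟨P.1.2, P.2.2⟩, rfl⟩
    simp only [Finsupp.add_apply, single_apply, intv_inj]
    by_cases h₁ : u = s ∧ w = t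
    · obtain ⟨rfl, rfl⟩ := h₁
      simp [hne, Ne.symm hne]
    by_cases h₂ : u = s ∧ u = t
    · obtain ⟨rfl, rfl⟩ := h₂
      simp [Ne.symm hne]
    by_cases h₃ : w = s ∧ w = t
    · obtain ⟨rfl, rfl⟩ := h₃
      simp [hne]
    simp [h₁, h₂, h₃, hy.apply_eq_zero hst h₁ h₂ h₃]
  have hpt : y (pt w) = - y (pt u) := by
    rw [hy₃, map_add, map_add, eps2_single_intv, eps2_single_intv, eps2_single_intv, if_neg hne,
      if_pos rfl, if_pos rfl, zero_add] at hε
    exact eq_neg_of_add_eq_zero_right hε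
  conv_lhs => rw [hy₃]
  rw [hpt, smul_sub, smul_single_one, smul_single_one, smul_single_one, single_neg,
    sub_eq_add_neg, add_assoc]

lemma apply_single_intv_of_covBy {r : Inc2 K X →ₗ[K] Inc2 K X}
    (hcm : comul2 ∘ₗ r = tmap r r ∘ₗ comul2) (hep : eps2 ∘ₗ r = eps2)
    {u w u' w' : X × X} (h : u ⋖ w) (h' : u' ≤ w') (hne : u' ≠ w')
    (hu : r (single (pt u) 1) = single (pt u') 1) (hw : r (single (pt w) 1) = single (pt w') 1) :
    r (single (intv h.le) 1) = r (single (intv h.le) 1) (intv h') • single (intv h') 1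
      + r (single (intv h.le) 1) (pt u') • (single (pt u') 1 - single (pt w') 1) := by
  refine IsSkewPrimitive.eq_smul_add ?_ ?_ h' hne
  · exact isSkewPrimitive_apply_single hcm (comul2_single_intv_of_covBy h) hu hw
  · rw [← LinearMap.comp_apply, hep, eps2_single_intv, if_neg h.ne]

section Translations

variable [@DecidableRel X X (· ≤ ·)] {φl φr : X → X} {r : Inc2 K X →ₗ[K] Inc2 K X}
  (hcm : comul2 ∘ₗ r = tmap r r ∘ₗ comul2) (hep : eps2 ∘ₗ r = eps2)
  (hind : Induces r (fun _ y => φl y) (fun x _ => φr x))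
include hcm hep hind

lemma apply_single_eq_alphaR {a b : X} (hab : a ⋖ b) (hlt : φr a < φr b) (c : X) :
    r (single (intv (show (a, c) ≤ (b, c) from ⟨hab.le, le_rfl⟩)) 1)
      = alphaR r φl φr c a b
          • single (intv (show (φl c, φr a) ≤ (φl c, φr b) from ⟨le_rfl, hlt.le⟩)) 1
        + betaR r φl φr c a b • (single (pt (φl c, φr a)) 1 - single (pt (φl c, φr b)) 1) := by
  have hx : (a, c) ⋖ (b, c) := Prod.mk_covBy_mk_iff_left.2 hab
  have h' : (φl c, φr a) ≤ (φl c, φr b) := ⟨le_rfl, hlt.le⟩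
  rw [show alphaR r φl φr c a b = _ from lam_eq_apply r hx.le h',
    show betaR r φl φr c a b = _ from lam_eq_apply r hx.le (le_refl (φl c, φr a))]
  exact apply_single_intv_of_covBy hcm hep hx h' (by simp [hlt.ne]) (hind a c) (hind b c)

lemma apply_single_eq_alphaL {a b : X} (hab : a ⋖ b) (hlt : φl a < φl b) (c : X) :
    r (single (intv (show (c, a) ≤ (c, b) from ⟨le_rfl, hab.le⟩)) 1)
      = alphaL r φl φr c a b
          • single (intv (show (φl a, φr c) ≤ (φl b, φr c) from ⟨hlt.le, le_rfl⟩)) 1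
        + betaL r φl φr c a b • (single (pt (φl a, φr c)) 1 - single (pt (φl b, φr c)) 1) := by
  have hx : (c, a) ⋖ (c, b) := Prod.mk_covBy_mk_iff_right.2 hab
  have h' : (φl a, φr c) ≤ (φl b, φr c) := ⟨hlt.le, le_rfl⟩
  rw [show alphaL r φl φr c a b = _ from lam_eq_apply r hx.le h',
    show betaL r φl φr c a b = _ from lam_eq_apply r hx.le (le_refl (φl a, φr c))]
  exact apply_single_intv_of_covBy hcm hep hx h' (by simp [hlt.ne]) (hind c a) (hind c b)

lemma sq_relations_alphaR (hsq1 : SetSq1 r (fun _ y => φl y) (fun x _ => φr x)) {a b : X}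
    (hab : a ⋖ b) (hab' : φr a ⋖ φr b) (hlt : φl (φr a) < φl (φr b)) (c : X) :
    alphaR r φl φr c a b * alphaL r φl φr (φl c) (φr a) (φr b) = 1 ∧
      alphaR r φl φr c a b * betaL r φl φr (φl c) (φr a) (φr b) + betaR r φl φr c a b = 0 :=
  coeff_relations_of_apply_eq_single (by simp [hlt.ne])
    (apply_single_eq_alphaR hcm hep hind hab hab'.lt c)
    (apply_single_eq_alphaL hcm hep hind hab' hlt (φl c)) (hind (φl c) (φr a)) (hind (φl c) (φr b))
    (hsq1 a b c c hab.le le_rfl (by rw [hgt_of_covBy hab, hgt_self, add_zero]) hlt.le le_rfl)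

lemma sq_relations_alphaL (hsq1 : SetSq1 r (fun _ y => φl y) (fun x _ => φr x)) {a b : X}
    (hab : a ⋖ b) (hab' : φl a ⋖ φl b) (hlt : φr (φl a) < φr (φl b)) (c : X) :
    alphaL r φl φr c a b * alphaR r φl φr (φr c) (φl a) (φl b) = 1 ∧
      alphaL r φl φr c a b * betaR r φl φr (φr c) (φl a) (φl b) + betaL r φl φr c a b = 0 :=
  coeff_relations_of_apply_eq_single (by simp [hlt.ne])
    (apply_single_eq_alphaL hcm hep hind hab hab'.lt c)
    (apply_single_eq_alphaR hcm hep hind hab' hlt (φr c)) (hind (φl a) (φr c)) (hind (φl b) (φr c))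
    (hsq1 c c a b le_rfl hab.le (by rw [hgt_of_covBy hab, hgt_self, zero_add]) le_rfl hlt.le)

end Translations

theorem statement8_general {K X : Type} [Field K] [PartialOrder X] [DecidableEq X]
    [@DecidableRel X X (· ≤ ·)] [LocallyFiniteOrder X]
    (φl φr : X → X)
    (hlb : Function.Bijective φl) (hrb : Function.Bijective φr)
    (hlmono : ∀ x y : X, x ≤ y ↔ φl x ≤ φl y)
    (hrmono : ∀ x y : X, x ≤ y ↔ φr x ≤ φr y)
    (hcomm : ∀ x : X, φl (φr x) = φr (φl x))
    (r : Inc2 K X →ₗ[K] Inc2 K X)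
    (hca : IsCoalgAuto r)
    (hind : Induces r (fun _ y => φl y) (fun x _ => φr x))
    (hsq1 : SetSq1 r (fun _ y => φl y) (fun x _ => φr x)) :
    ∀ a b c : X, a ⋖ b →
      (alphaR r φl φr (φl (φr c)) (φl (φr a)) (φl (φr b)) = alphaR r φl φr c a b ∧
       betaR r φl φr (φl (φr c)) (φl (φr a)) (φl (φr b)) = betaR r φl φr c a b ∧
       alphaL r φl φr (φl (φr c)) (φl (φr a)) (φl (φr b)) = alphaL r φl φr c a b ∧
       betaL r φl φr (φl (φr c)) (φl (φr a)) (φl (φr b)) = betaL r φl φr c a b) := by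
  intro a b c hab
  obtain ⟨-, hcm, hep⟩ := hca
  have hl {x y : X} (h : x ⋖ y) : φl x ⋖ φl y := covBy_apply_of_bijective hlb hlmono h
  have hr {x y : X} (h : x ⋖ y) : φr x ⋖ φr y := covBy_apply_of_bijective hrb hrmono h
  obtain ⟨hR₁, hR₂⟩ := sq_relations_alphaR hcm hep hind hsq1 hab (hr hab) (hl (hr hab)).lt c
  obtain ⟨hL₁, hL₂⟩ := sq_relations_alphaL hcm hep hind hsq1 hab (hl hab) (hr (hl hab)).lt c
  obtain ⟨hL₁', hL₂'⟩ := sq_relations_alphaL hcm hep hind hsq1 (hr hab) (hl (hr hab))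
    (hr (hl (hr hab))).lt (φl c)
  obtain ⟨hR₁', hR₂'⟩ := sq_relations_alphaR hcm hep hind hsq1 (hl hab) (hr (hl hab))
    (hl (hr (hl hab))).lt (φr c)
  rw [← hcomm c] at hL₁' hL₂'
  rw [← hcomm a, ← hcomm b] at hR₁' hR₂'
  exact ⟨(left_inv_eq_right_inv hR₁ hL₁').symm,
    eq_of_mul_eq_one_of_mul_add_eq_zero hR₁ hR₂ hL₂',
    (left_inv_eq_right_inv hL₁ hR₁').symm,
    eq_of_mul_eq_one_of_mul_add_eq_zero hL₁ hL₂ hR₂'⟩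

/-- if `r` has set-type square up to height 1, then the `α`'s and
`β`'s are invariant under applying `φ := φ_l ∘ φ_r` to all arguments. -/
theorem statement8 {K X : Type} [Field K] [PartialOrder X] [DecidableEq X]
    [@DecidableRel X X (· ≤ ·)] [LocallyFiniteOrder X]
    (hconn : Connected X)
    (φl φr : X → X)
    (hlb : Function.Bijective φl) (hrb : Function.Bijective φr)
    (hlmono : ∀ x y : X, x ≤ y ↔ φl x ≤ φl y)
    (hrmono : ∀ x y : X, x ≤ y ↔ φr x ≤ φr y)
    (hcomm : ∀ x : X, φl (φr x) = φr (φl x))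
    (r : Inc2 K X →ₗ[K] Inc2 K X)
    (hca : IsCoalgAuto r) (hnd : NonDeg r)
    (hind : Induces r (fun _ y => φl y) (fun x _ => φr x))
    (hnd0 : NonDeg0 (fun _ y => φl y) (fun x _ => φr x))
    (hbr0 : Braid0 (r0map (fun _ y => φl y) (fun x _ => φr x)))
    (hsq1 : SetSq1 r (fun _ y => φl y) (fun x _ => φr x)) :
    ∀ a b c : X, a ⋖ b →
      (alphaR r φl φr (φl (φr c)) (φl (φr a)) (φl (φr b)) = alphaR r φl φr c a b ∧
       betaR r φl φr (φl (φr c)) (φl (φr a)) (φl (φr b)) = betaR r φl φr c a b ∧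
       alphaL r φl φr (φl (φr c)) (φl (φr a)) (φl (φr b)) = alphaL r φl φr c a b ∧
       betaL r φl φr (φl (φr c)) (φl (φr a)) (φl (φr b)) = betaL r φl φr c a b) :=
  statement8_general φl φr hlb hrb hlmono hrmono hcomm r hca hind hsq1

end BraidPaper
end
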